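/- arXiv:2412.16800 — 4 statements merged into one kernel-verified Lean document; each statement's English description precedes it below -/
import Mathlib

section
/- For any smooth strictly positive function ρ on the torus, ∫_𝕋 ρ (∂_x² log √ρ)² dx = ∫_𝕋 (∂_x²√ρ)² dx + (1/3)∫_𝕋 (∂_x√ρ)⁴/ρ dx = ∫_𝕋 (∂_x²√ρ)² dx + (16/3)∫_𝕋 (∂_x ρ^{1/4})⁴ dx. -/
open Real intervalIntegral

lemma periodic_deriv' {f : ℝ → ℝ} (hf : Function.Periodic f 1) :
    Function.Periodic (deriv f) 1 := by
  intro x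
  have h1 : (fun y => f (y + 1)) = f := funext fun y => hf y
  calc deriv f (x + 1) = deriv (fun y => f (y + 1)) x := (deriv_comp_add_const f 1 x).symm
    _ = deriv f x := by rw [h1]

set_option maxHeartbeats 1000000 in

/-- For a smooth strictly positive periodic density `ρ` on the torus (period 1),
`∫ ρ (∂_x² log √ρ)² = ∫ (∂_x²√ρ)² + (1/3)∫ (∂_x√ρ)⁴/ρ = ∫ (∂_x²√ρ)² + (16/3)∫ (∂_x ρ^{1/4})⁴`. -/
theorem entropy_dissipation_identity
    (ρ : ℝ → ℝ) (hρ : ContDiff ℝ (⊤ : ℕ∞) ρ) (hper : Function.Periodic ρ 1)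
    (δ : ℝ) (hδ : 0 < δ) (hpos : ∀ x, δ ≤ ρ x) :
    (∫ x in (0:ℝ)..1, ρ x * (deriv (deriv (fun y => Real.log (Real.sqrt (ρ y)))) x) ^ 2
      = (∫ x in (0:ℝ)..1, (deriv (deriv (fun y => Real.sqrt (ρ y))) x) ^ 2)
        + (1/3) * ∫ x in (0:ℝ)..1, (deriv (fun y => Real.sqrt (ρ y)) x) ^ 4 / ρ x) ∧
    (∫ x in (0:ℝ)..1, ρ x * (deriv (deriv (fun y => Real.log (Real.sqrt (ρ y)))) x) ^ 2
      = (∫ x in (0:ℝ)..1, (deriv (deriv (fun y => Real.sqrt (ρ y))) x) ^ 2)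
        + (16/3) * ∫ x in (0:ℝ)..1, (deriv (fun y => (ρ y) ^ ((1:ℝ)/4)) x) ^ 4) := by
  have hρpos : ∀ x, 0 < ρ x := fun x => lt_of_lt_of_le hδ (hpos x)
  have hρne : ∀ x, ρ x ≠ 0 := fun x => ne_of_gt (hρpos x)
  set s : ℝ → ℝ := fun y => Real.sqrt (ρ y) with hsdef
  have hspos : ∀ x, 0 < s x := fun x => Real.sqrt_pos.mpr (hρpos x)
  have hsne : ∀ x, s x ≠ 0 := fun x => ne_of_gt (hspos x)
  have hρsq : ∀ x, ρ x = s x ^ 2 := fun x => (Real.sq_sqrt (hρpos x).le).symm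
  -- smoothness of s
  have hρ2 : ContDiff ℝ ((⊤:ℕ∞) : WithTop ℕ∞) ρ := hρ.of_le (by simp)
  have hsC : ContDiff ℝ ((⊤:ℕ∞) : WithTop ℕ∞) s := by
    rw [contDiff_iff_contDiffAt]
    exact fun x => (hρ2.contDiffAt).sqrt (hρne x)
  have hsd : ∀ x, HasDerivAt s (deriv s x) x :=
    fun x => (hsC.differentiable (by simp) x).hasDerivAt
  set u : ℝ → ℝ := deriv s with hudef
  have huC : ContDiff ℝ ((⊤:ℕ∞) : WithTop ℕ∞) u := (contDiff_infty_iff_deriv.mp hsC).2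
  have hud : ∀ x, HasDerivAt u (deriv u x) x :=
    fun x => (huC.differentiable (by simp) x).hasDerivAt
  set v : ℝ → ℝ := deriv u with hvdef
  have hvC : Continuous v := (contDiff_infty_iff_deriv.mp huC).2.continuous
  have huc : Continuous u := huC.continuous
  have hsc : Continuous s := hsC.continuous
  have hρc : Continuous ρ := hρ.continuous
  -- first derivative of log ∘ s
  have hlog1 : deriv (fun y => Real.log (s y)) = fun x => u x / s x :=
    funext fun x => ((hsd x).log (hsne x)).deriv
  -- second derivative of log ∘ s
  have hlog2 : ∀ x, deriv (deriv (fun y => Real.log (s y))) x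
      = (v x * s x - u x * u x) / (s x) ^ 2 := by
    intro x
    rw [hlog1]
    exact ((hud x).div (hsd x) (hsne x)).deriv
  -- pointwise integrand identity
  have hpt : ∀ x, ρ x * (deriv (deriv (fun y => Real.log (s y))) x) ^ 2
      = v x ^ 2 - 2 * (u x ^ 2 * v x / s x) + u x ^ 4 / ρ x := by
    intro x
    rw [hlog2 x, hρsq x]
    field_simp [hsne x]
    ring
  -- periodicity
  have hsper : Function.Periodic s 1 := fun x => by simp only [hsdef, hper x]
  have huper : Function.Periodic u 1 := periodic_deriv' hsper
  -- integration by parts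
  have hibp : ∫ x in (0:ℝ)..1, u x ^ 2 * v x / s x
      = (1/3) * ∫ x in (0:ℝ)..1, u x ^ 4 / ρ x := by
    have hF : ∀ x ∈ Set.uIcc (0:ℝ) 1, HasDerivAt (fun y => u y ^ 3) (3 * u x ^ 2 * v x) x := by
      intro x _
      have := (hud x).fun_pow 3
      simpa [mul_comm, mul_assoc, mul_left_comm] using this
    have hG : ∀ x ∈ Set.uIcc (0:ℝ) 1, HasDerivAt (fun y => (s y)⁻¹) (-(u x) / (s x) ^ 2) x := by
      intro x _
      simpa using (hsd x).fun_inv (hsne x)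
    have hF' : IntervalIntegrable (fun x => 3 * u x ^ 2 * v x) MeasureTheory.volume 0 1 := by
      clear_value v u s
      exact (((continuous_const.mul (huc.pow 2)).mul hvC).intervalIntegrable 0 1)
    have hG' : IntervalIntegrable (fun x => -(u x) / (s x) ^ 2) MeasureTheory.volume 0 1 := by
      clear_value v u s
      simp only [div_eq_mul_inv]
      exact (((huc.neg).mul ((hsc.pow 2).inv₀ (fun x => pow_ne_zero 2 (hsne x)))).intervalIntegrable 0 1)
    have key := intervalIntegral.integral_deriv_mul_eq_sub hF hG hF' hG'
    have hbd : u 1 ^ 3 * (s 1)⁻¹ - u 0 ^ 3 * (s 0)⁻¹ = 0 := by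
      have h1 : u 1 = u 0 := by simpa using (huper 0)
      have h2 : s 1 = s 0 := by simpa using (hsper 0)
      rw [h1, h2]; ring
    rw [hbd] at key
    -- key : ∫ 3 u² v / s + u³ * (-u/s²) = 0
    have hsplit : (∫ x in (0:ℝ)..1, (3 * u x ^ 2 * v x * (s x)⁻¹ + u x ^ 3 * (-(u x) / (s x) ^ 2)))
        = (∫ x in (0:ℝ)..1, 3 * (u x ^ 2 * v x / s x)) - ∫ x in (0:ℝ)..1, u x ^ 4 / ρ x := by
      rw [← intervalIntegral.integral_sub]
      · apply intervalIntegral.integral_congr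
        intro x _
        show 3 * u x ^ 2 * v x * (s x)⁻¹ + u x ^ 3 * (-(u x) / (s x) ^ 2)
          = 3 * (u x ^ 2 * v x / s x) - u x ^ 4 / ρ x
        rw [hρsq x]
        field_simp
        ring
      · clear_value v u s
        simp only [div_eq_mul_inv]
        exact ((continuous_const.mul (((huc.pow 2).mul hvC).mul (hsc.inv₀ hsne))).intervalIntegrable 0 1)
      · clear_value v u s
        simp only [div_eq_mul_inv]
        exact (((huc.pow 4).mul (hρc.inv₀ hρne)).intervalIntegrable 0 1)
    rw [hsplit] at key
    rw [intervalIntegral.integral_const_mul] at key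
    linarith
  -- integrability of pieces
  have hint1 : IntervalIntegrable (fun x => v x ^ 2) MeasureTheory.volume 0 1 := by
    clear_value v u s
    exact ((hvC.pow 2).intervalIntegrable 0 1)
  have hint2 : IntervalIntegrable (fun x => u x ^ 2 * v x / s x) MeasureTheory.volume 0 1 := by
    clear_value v u s
    simp only [div_eq_mul_inv]
    exact ((((huc.pow 2).mul hvC).mul (hsc.inv₀ hsne)).intervalIntegrable 0 1)
  have hint3 : IntervalIntegrable (fun x => u x ^ 4 / ρ x) MeasureTheory.volume 0 1 := by
    clear_value v u s
    simp only [div_eq_mul_inv]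
    exact (((huc.pow 4).mul (hρc.inv₀ hρne)).intervalIntegrable 0 1)
  -- main computation for first identity
  have hmain : ∫ x in (0:ℝ)..1, ρ x * (deriv (deriv (fun y => Real.log (Real.sqrt (ρ y)))) x) ^ 2
      = (∫ x in (0:ℝ)..1, v x ^ 2) + (1/3) * ∫ x in (0:ℝ)..1, u x ^ 4 / ρ x := by
    have : (∫ x in (0:ℝ)..1, ρ x * (deriv (deriv (fun y => Real.log (Real.sqrt (ρ y)))) x) ^ 2)
        = ∫ x in (0:ℝ)..1, (v x ^ 2 - 2 * (u x ^ 2 * v x / s x) + u x ^ 4 / ρ x) := by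
      apply intervalIntegral.integral_congr
      intro x _
      exact hpt x
    rw [this]
    rw [intervalIntegral.integral_add ((hint1.sub (hint2.const_mul 2))) hint3,
        intervalIntegral.integral_sub hint1 (hint2.const_mul 2),
        intervalIntegral.integral_const_mul, hibp]
    ring
  have hveq : (fun x => v x ^ 2) = fun x => (deriv (deriv (fun y => Real.sqrt (ρ y))) x) ^ 2 := rfl
  constructor
  · rw [hmain]
  · rw [hmain]
    congr 1
    -- (1/3) ∫ u⁴/ρ = (16/3) ∫ (deriv ρ^{1/4})⁴
    have hq : ∀ x, deriv (fun y => (ρ y) ^ ((1:ℝ)/4)) x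
        = deriv ρ x * (1/4) * ρ x ^ ((1:ℝ)/4 - 1) := by
      intro x
      exact (((hρ2.differentiable (by simp) x).hasDerivAt).rpow_const (Or.inl (hρne x))).deriv
    have hu_eq : ∀ x, u x = deriv ρ x / (2 * Real.sqrt (ρ x)) := by
      intro x
      exact (((hρ2.differentiable (by simp) x).hasDerivAt).sqrt (hρne x)).deriv
    have hptw : ∀ x, u x ^ 4 / ρ x = 16 * (deriv (fun y => (ρ y) ^ ((1:ℝ)/4)) x) ^ 4 := by
      intro x
      rw [hq x, hu_eq x]
      have h1 : (ρ x ^ ((1:ℝ)/4 - 1)) ^ (4:ℕ) = (ρ x ^ 3)⁻¹ := by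
        rw [← Real.rpow_natCast (ρ x ^ ((1:ℝ)/4 - 1)) 4, ← Real.rpow_mul (hρpos x).le]
        norm_num
      have h2 : Real.sqrt (ρ x) ^ 4 = ρ x ^ 2 := by
        rw [show (4:ℕ) = 2 * 2 from rfl, pow_mul, Real.sq_sqrt (hρpos x).le]
      rw [mul_pow, mul_pow, div_pow, mul_pow, h1, h2]
      field_simp
      ring
    have : (∫ x in (0:ℝ)..1, u x ^ 4 / ρ x)
        = 16 * ∫ x in (0:ℝ)..1, (deriv (fun y => (ρ y) ^ ((1:ℝ)/4)) x) ^ 4 := by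
      rw [← intervalIntegral.integral_const_mul]
      exact intervalIntegral.integral_congr fun x _ => hptw x
    rw [this]
    ring
end

section
/- Vacuum-avoidance from the energy bound: let ρ ∈ H¹(𝕋) with ρ ≥ 0, total mass M₀ = ∫_𝕋 ρ dx, and suppose √ρ ∈ H¹(𝕋) with ∫_𝕋 (∂_x√ρ)² dx ≤ 2E₀ where E₀ ≤ (1/2)(M₀^{1/2} − δ M₀^{−1/2})² for some 0 < δ ≤ M₀. Then inf_{x ∈ 𝕋} ρ(x) ≥ δ. -/
/-!
By periodicity, `ρ y - ρ x` is bounded by the variation of `ρ` along each of the two arcs of the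
circle joining `x` to `y`, hence by half the total variation `∫ |ρ'|`; averaging over `y` gives
`M₀ - ρ x ≤ ½ ∫ |ρ'|`. Since `ρ' = 2 √ρ (√ρ)'`, Cauchy–Schwarz bounds `½ ∫ |ρ'|` by
`√M₀ · √(2 E₀) ≤ √M₀ (√M₀ - δ / √M₀) = M₀ - δ`.
-/

open Real Function MeasureTheory

theorem Function.Periodic.deriv {𝕜 F : Type*} [NontriviallyNormedField 𝕜] [NormedAddCommGroup F]
    [NormedSpace 𝕜 F] {f : 𝕜 → F} {c : 𝕜} (h : Periodic f c) : Periodic (deriv f) c := fun x => by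
  rw [← deriv_comp_add_const, funext h]

theorem sq_integral_mul_le_integral_sq_mul_integral_sq {α : Type*} [MeasurableSpace α]
    {μ : Measure α} {f g : α → ℝ} (hf : Integrable (fun x => f x ^ 2) μ)
    (hg : Integrable (fun x => g x ^ 2) μ) (hfg : Integrable (fun x => f x * g x) μ) :
    (∫ x, f x * g x ∂μ) ^ 2 ≤ (∫ x, f x ^ 2 ∂μ) * ∫ x, g x ^ 2 ∂μ := by
  have hquad : ∀ t : ℝ, 0 ≤ (∫ x, g x ^ 2 ∂μ) * (t * t) + 2 * (∫ x, f x * g x ∂μ) * t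
      + ∫ x, f x ^ 2 ∂μ := fun t => by
    have hexpand : (fun x => (t * g x + f x) ^ 2)
        = fun x => t * t * g x ^ 2 + 2 * t * (f x * g x) + f x ^ 2 := by
      ext x; ring
    have hsum : ∫ x, (t * g x + f x) ^ 2 ∂μ = (∫ x, g x ^ 2 ∂μ) * (t * t)
        + 2 * (∫ x, f x * g x ∂μ) * t + ∫ x, f x ^ 2 ∂μ := by
      rw [hexpand, integral_add ((hg.const_mul _).fun_add (hfg.const_mul _)) hf,
        integral_add (hg.const_mul _) (hfg.const_mul _), integral_const_mul, integral_const_mul]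
      ring
    exact hsum ▸ integral_nonneg fun x => sq_nonneg _
  have hdisc := discrim_le_zero hquad
  rw [discrim] at hdisc
  linarith

section Periodic

variable {f : ℝ → ℝ} {T : ℝ}

theorem two_mul_sub_le_integral_abs_deriv_of_periodic (hper : Periodic f T) (hf : ContDiff ℝ 1 f)
    {x y : ℝ} (hxy : x ≤ y) (hyx : y ≤ x + T) : 2 * (f y - f x) ≤ ∫ t in x..x + T, |deriv f t| := by
  have hd : Continuous (deriv f) := hf.continuous_deriv le_rfl
  have ftc : ∀ a b, ∫ t in a..b, deriv f t = f b - f a := fun a b =>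
    intervalIntegral.integral_deriv_eq_sub (fun t _ => hf.differentiable one_ne_zero t)
      (hd.intervalIntegrable a b)
  have rise : f y - f x ≤ ∫ t in x..y, |deriv f t| := by
    rw [← ftc]
    exact (le_abs_self _).trans (intervalIntegral.abs_integral_le_integral_abs hxy)
  have fall : f y - f x ≤ ∫ t in y..x + T, |deriv f t| := by
    rw [← hper x, ← neg_sub, ← ftc]
    exact (neg_le_abs _).trans (intervalIntegral.abs_integral_le_integral_abs hyx)
  rw [← intervalIntegral.integral_add_adjacent_intervals (hd.abs.intervalIntegrable x y)
    (hd.abs.intervalIntegrable y (x + T))]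
  linarith

theorem sub_le_half_integral_abs_deriv_of_periodic (hper : Periodic f T) (hT : 0 < T)
    (hf : ContDiff ℝ 1 f) (x y : ℝ) : f y - f x ≤ (∫ t in 0..T, |deriv f t|) / 2 := by
  have hmem := toIcoMod_mem_Ico hT x y
  have harc : ∫ t in x..x + T, |deriv f t| = ∫ t in 0..T, |deriv f t| := by
    have habs : Periodic (fun t => |deriv f t|) T := hper.deriv.comp abs
    simpa using habs.intervalIntegral_add_eq x 0
  have hy : f (toIcoMod hT x y) = f y := hper.sub_zsmul_eq _
  have := two_mul_sub_le_integral_abs_deriv_of_periodic hper hf hmem.1 hmem.2.le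
  rw [hy, harc] at this
  linarith

theorem integral_sub_le_half_integral_abs_deriv_of_periodic (hper : Periodic f T)
    (hT : 0 < T) (hf : ContDiff ℝ 1 f) (x : ℝ) :
    (∫ y in 0..T, f y) - T * f x ≤ T * ((∫ t in 0..T, |deriv f t|) / 2) := by
  have hc : Continuous f := hf.continuous
  calc (∫ y in 0..T, f y) - T * f x = ∫ y in 0..T, (f y - f x) := by
        rw [intervalIntegral.integral_sub (hc.intervalIntegrable _ _) intervalIntegrable_const]
        simp
    _ ≤ ∫ _ in 0..T, (∫ t in 0..T, |deriv f t|) / 2 :=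
        intervalIntegral.integral_mono_on hT.le ((hc.sub continuous_const).intervalIntegrable _ _)
          intervalIntegrable_const fun y _ =>
            sub_le_half_integral_abs_deriv_of_periodic hper hT hf x y
    _ = _ := by simp [mul_div_assoc]

end Periodic

theorem sq_integral_abs_deriv_sq_le {s : ℝ → ℝ} (hs : ContDiff ℝ 1 s) {a b : ℝ} (hab : a ≤ b) :
    (∫ x in a..b, |deriv (fun y => s y ^ 2) x|) ^ 2
      ≤ 4 * (∫ x in a..b, s x ^ 2) * ∫ x in a..b, deriv s x ^ 2 := by
  have hsc : Continuous s := hs.continuous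
  have hdc : Continuous (deriv s) := hs.continuous_deriv le_rfl
  have hderiv : ∀ x, |deriv (fun y => s y ^ 2) x| = 2 * (|s x| * |deriv s x|) := fun x => by
    rw [deriv_fun_pow (hs.differentiable one_ne_zero x)]
    simp [abs_mul, mul_assoc]
  have cs := sq_integral_mul_le_integral_sq_mul_integral_sq (μ := volume.restrict (Set.Ioc a b))
    (f := fun x => |s x|) (g := fun x => |deriv s x|) (hsc.abs.pow 2).integrableOn_Ioc
    (hdc.abs.pow 2).integrableOn_Ioc (hsc.abs.mul hdc.abs).integrableOn_Ioc
  simp only [sq_abs] at cs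
  simp only [hderiv, intervalIntegral.integral_of_le hab, integral_const_mul]
  rw [mul_pow]
  linarith

theorem mul_sq_sqrt_sub_div_sqrt {M δ : ℝ} (hM : 0 < M) : M * (√M - δ / √M) ^ 2 = (M - δ) ^ 2 := by
  have hsq := sq_sqrt hM.le
  have hpos := sqrt_pos.2 hM
  field_simp
  rw [hsq]

/-- Vacuum avoidance from the energy bound: if `ρ ≥ 0` is periodic with mass `M₀ = ∫ ρ`,
`√ρ` is `C¹` with `∫ (∂_x√ρ)² ≤ 2E₀` and `E₀ ≤ (1/2)(√M₀ − δ/√M₀)²` for some `0 < δ ≤ M₀`,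
then `ρ ≥ δ` everywhere. -/
theorem vacuum_avoidance
    (ρ : ℝ → ℝ) (hper : Function.Periodic ρ 1) (hnonneg : ∀ x, 0 ≤ ρ x)
    (hs : ContDiff ℝ 1 (fun x => Real.sqrt (ρ x)))
    (M₀ E₀ δ : ℝ) (hM : M₀ = ∫ x in (0:ℝ)..1, ρ x)
    (hδ : 0 < δ) (hδM : δ ≤ M₀)
    (hE : ∫ x in (0:ℝ)..1, (deriv (fun y => Real.sqrt (ρ y)) x) ^ 2 ≤ 2 * E₀)
    (hE0 : E₀ ≤ (1/2) * (Real.sqrt M₀ - δ / Real.sqrt M₀) ^ 2) :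
    ∀ x, δ ≤ ρ x := by
  intro x
  have hρ : ρ = fun y => √(ρ y) ^ 2 := funext fun y => (sq_sqrt (hnonneg y)).symm
  have hM₀ : 0 < M₀ := hδ.trans_le hδM
  have hmean := integral_sub_le_half_integral_abs_deriv_of_periodic hper one_pos
    (hρ ▸ hs.pow 2) x
  have hcs := sq_integral_abs_deriv_sq_le hs zero_le_one
  rw [← hρ, ← hM] at hcs
  have hJ_sq : (∫ t in (0:ℝ)..1, |deriv ρ t|) ^ 2 ≤ (2 * (M₀ - δ)) ^ 2 :=
    calc _ ≤ 4 * M₀ * ∫ t in (0:ℝ)..1, deriv (fun y => √(ρ y)) t ^ 2 := hcs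
      _ ≤ 4 * (M₀ * (√M₀ - δ / √M₀) ^ 2) := by nlinarith
      _ = (2 * (M₀ - δ)) ^ 2 := by rw [mul_sq_sqrt_sub_div_sqrt hM₀]; ring
  have hJ := (abs_le_of_sq_le_sq' hJ_sq (by linarith)).2
  rw [← hM] at hmean
  linarith
end

section
/- Polar factorization identities: let ψ ∈ H¹(𝕋) and let φ ∈ L^∞(𝕋) satisfy ψ = |ψ|φ pointwise a.e. Define √ρ := |ψ| and Λ := Im(φ̄ ∂_x ψ). Then √ρ ∈ H¹(𝕋) with ∂_x√ρ = Re(φ̄ ∂_x ψ) a.e., and |∂_x ψ|² = (∂_x√ρ)² + Λ² almost everywhere. -/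
/-!
At a zero of `ψ` where `ψ' ≠ 0` the difference quotient stays away from `0`, so such zeros are
isolated; they form a countable, hence null, set. Off it, either `ψ x = 0 = ψ' x`, and then
`‖ψ y‖ = o(y - x)` has derivative `0`, or `ψ x ≠ 0`, and then
`‖ψ‖' = Re(conj ψ · ψ') / ‖ψ‖ = Re(conj φ · ψ')` because `ψ x = ‖ψ x‖ φ x`.
The second identity is `‖conj φ · ψ'‖ = ‖ψ'‖`, valid once `‖φ‖ = 1`, i.e. where `ψ x ≠ 0`.
-/

open Real MeasureTheory Complex

open Filter ComplexConjugate
open scoped RealInnerProductSpace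

section ZerosOfDerivative

variable {𝕜 F : Type*} [NontriviallyNormedField 𝕜] [HereditarilyLindelofSpace 𝕜]
  [NormedAddCommGroup F] [NormedSpace 𝕜 F]

theorem countable_setOf_eq_zero_and_deriv_ne_zero (f : 𝕜 → F) :
    {x | f x = 0 ∧ deriv f x ≠ 0}.Countable := by
  refine (HereditarilyLindelofSpace.isLindelof _).countable ?_
  rw [discreteTopology_subtype_iff]
  rintro x ⟨hx0, hx'⟩
  have hslope := hasDerivAt_iff_tendsto_slope.mp
    (differentiableAt_of_deriv_ne_zero hx').hasDerivAt
  rw [inf_principal_eq_bot]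
  filter_upwards [hslope.eventually_ne hx'] with y hy ⟨hy0, _⟩
  exact hy (by simp [slope_def_module, hx0, hy0])

theorem ae_deriv_eq_zero_of_eq_zero [MeasurableSpace 𝕜]
    (μ : Measure 𝕜) [NullSingletonClass μ] (f : 𝕜 → F) :
    ∀ᵐ x ∂μ, f x = 0 → deriv f x = 0 := by
  filter_upwards [(countable_setOf_eq_zero_and_deriv_ne_zero f).ae_notMem μ] with x hx h0
  by_contra h'
  exact hx ⟨h0, h'⟩

end ZerosOfDerivative

theorem HasDerivAt.norm_of_eq_zero {F : Type*} [NormedAddCommGroup F] [NormedSpace ℝ F]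
    {f : ℝ → F} {x : ℝ} (hf : HasDerivAt f 0 x) (h0 : f x = 0) :
    HasDerivAt (‖f ·‖) 0 x := by
  rw [hasDerivAt_iff_isLittleO] at hf ⊢
  simpa [h0] using hf.norm_left

theorem HasDerivAt.norm {F : Type*} [NormedAddCommGroup F] [InnerProductSpace ℝ F]
    {f : ℝ → F} {f' : F} {x : ℝ} (hf : HasDerivAt f f' x) (h0 : f x ≠ 0) :
    HasDerivAt (‖f ·‖) (⟪f x, f'⟫ / ‖f x‖) x := by
  have h := (Real.hasDerivAt_sqrt (by positivity : ‖f x‖ ^ 2 ≠ 0)).comp x hf.norm_sq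
  simp only [Function.comp_def, Real.sqrt_sq (norm_nonneg _)] at h
  exact h.congr_deriv (by field_simp)

theorem HasDerivAt.norm_of_eq_norm_mul {f : ℝ → ℂ} {f' u : ℂ} {x : ℝ}
    (hf : HasDerivAt f f' x) (hpolar : f x = ‖f x‖ * u) (hzero : f x = 0 → f' = 0) :
    HasDerivAt (‖f ·‖) (conj u * f').re x := by
  by_cases h0 : f x = 0
  · rw [hzero h0] at hf ⊢
    simpa using hf.norm_of_eq_zero h0
  · convert hf.norm h0 using 1
    have hinner : ⟪f x, f'⟫ = ‖f x‖ * (conj u * f').re := by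
      rw [Complex.inner]
      nth_rw 1 [hpolar]
      rw [map_mul, conj_ofReal, mul_comm f', mul_assoc, re_ofReal_mul]
    rw [hinner, mul_div_cancel_left₀ _ (norm_ne_zero_iff.mpr h0)]

theorem Complex.sq_norm_eq_re_sq_add_im_sq_conj_mul {u : ℂ} (hu : ‖u‖ = 1) (z : ℂ) :
    ‖z‖ ^ 2 = (conj u * z).re ^ 2 + (conj u * z).im ^ 2 := by
  have hz : ‖conj u * z‖ = ‖z‖ := by rw [norm_mul, norm_conj, hu, one_mul]
  rw [← hz, Complex.sq_norm, Complex.normSq_apply]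
  ring

/-- Polar factorization: if `ψ` is an (H¹, modelled as differentiable) wave function and `φ` a
polar factor (`ψ = |ψ|φ` with `|φ| = 1` where `ψ ≠ 0`), then, setting `√ρ = |ψ|` and
`Λ = Im(φ̄ ∂_x ψ)`, one has a.e. `∂_x√ρ = Re(φ̄ ∂_x ψ)` and `|∂_x ψ|² = (∂_x√ρ)² + Λ²`. -/
theorem polar_factorization
    (ψ φ : ℝ → ℂ) (hψ : Differentiable ℝ ψ)
    (hφ_polar : ∀ x, ψ x = (‖ψ x‖ : ℂ) * φ x)
    (hφ_unit : ∀ x, ψ x ≠ 0 → ‖φ x‖ = 1) :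
    (∀ᵐ x : ℝ, HasDerivAt (fun y => ‖ψ y‖)
        ((starRingEnd ℂ (φ x) * deriv ψ x).re) x) ∧
    (∀ᵐ x : ℝ, (‖deriv ψ x‖) ^ 2
        = ((starRingEnd ℂ (φ x) * deriv ψ x).re) ^ 2
          + ((starRingEnd ℂ (φ x) * deriv ψ x).im) ^ 2) := by
  have hderiv_zero := ae_deriv_eq_zero_of_eq_zero volume ψ
  refine ⟨?_, ?_⟩
  · filter_upwards [hderiv_zero] with x hx
    exact (hψ x).hasDerivAt.norm_of_eq_norm_mul (hφ_polar x) hx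
  · filter_upwards [hderiv_zero] with x hx
    by_cases h0 : ψ x = 0
    · simp [hx h0]
    · exact sq_norm_eq_re_sq_add_im_sq_conj_mul (hφ_unit x h0) _
end

section
/- Uniqueness of the lifted wave function up to a constant phase: let ψ₁, ψ₂ ∈ H¹([a,b]) be two wave functions associated to the same hydrodynamic data (√ρ, Λ) ∈ H¹([a,b]) × L²([a,b]), i.e. √ρ = |ψ₁| = |ψ₂| and Λ = Im(φ̄₁ ∂_x ψ₁) = Im(φ̄₂ ∂_x ψ₂) a.e., where φ_j is a polar factor of ψ_j. Assume ρ > 0 on [a,b]. Then there exists θ ∈ [0, 2π) with ψ₂ = e^{iθ} ψ₁. -/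
/-!
For a nonvanishing wave function, `conj ψ · ψ' = |ψ|² · ψ'/ψ` has real part `(|ψ|²)'/2`
(a right derivative suffices, so `|ψ₁| = |ψ₂|` on `[a,b]` is enough) and imaginary part `|ψ| Λ`.
So the hydrodynamic data determine the logarithmic derivative `ψ'/ψ`; hence `ψ₂/ψ₁` has zero
derivative, is constant on `[a,b]`, and this constant has modulus one.
-/

open Real Complex ComplexConjugate

open Set in
theorem HasDerivAt.eq_of_eventuallyEq_nhdsGE {F : Type*} [NormedAddCommGroup F]
    [NormedSpace ℝ F] {f g : ℝ → F} {f' g' : F} {x : ℝ} (hf : HasDerivAt f f' x)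
    (hg : HasDerivAt g g' x) (hfg : f =ᶠ[nhdsWithin x (Ici x)] g) : f' = g' :=
  (uniqueDiffWithinAt_Ici x).eq_deriv _ hf.hasDerivWithinAt
    (hg.hasDerivWithinAt.congr_of_eventuallyEq hfg (hfg.eq_of_nhdsWithin self_mem_Ici))

theorem div_eqOn_Icc_of_deriv_mul_eq {𝕜 : Type*} [RCLike 𝕜] {a b : ℝ} {f g : ℝ → 𝕜}
    (hf : Differentiable ℝ f) (hg : Differentiable ℝ g) (hg0 : ∀ x ∈ Set.Icc a b, g x ≠ 0)
    (h : ∀ x ∈ Set.Ico a b, deriv f x * g x = f x * deriv g x) :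
    ∀ x ∈ Set.Icc a b, f x / g x = f a / g a := by
  refine constant_of_has_deriv_right_zero
    (hf.continuous.continuousOn.div hg.continuous.continuousOn hg0) fun x hx => ?_
  have hd := (hf x).hasDerivAt.div (hg x).hasDerivAt (hg0 x (Set.Ico_subset_Icc_self hx))
  rw [h x hx, sub_self, zero_div] at hd
  exact hd.hasDerivWithinAt

namespace Complex

theorem im_conj_div_norm_mul (z w : ℂ) :
    (conj (z / (‖z‖ : ℂ)) * w).im = (conj z * w).im / ‖z‖ := by
  rw [map_div₀, conj_ofReal, div_mul_eq_mul_div, div_ofReal_im]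

theorem mul_comm_eq_of_conj_mul_eq {z₁ z₂ w₁ w₂ : ℂ} (hz : ‖z₁‖ = ‖z₂‖) (hz₁ : z₁ ≠ 0)
    (h : conj z₁ * w₁ = conj z₂ * w₂) : w₂ * z₁ = z₂ * w₁ := by
  have hN : conj z₁ * z₁ = conj z₂ * z₂ := by
    rw [conj_mul', conj_mul', hz]
  have hN₀ : conj z₁ * z₁ ≠ 0 := by
    simpa [conj_mul'] using hz₁
  refine sub_eq_zero.mp (mul_left_cancel₀ hN₀ ?_)
  linear_combination (w₂ * z₁) * hN - z₁ * z₂ * h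

theorem exists_mem_Ico_exp_mul_I_eq {c : ℂ} (hc : ‖c‖ = 1) :
    ∃ θ ∈ Set.Ico 0 (2 * π), exp (θ * I) = c := by
  obtain ⟨θ, rfl⟩ := (norm_eq_one_iff c).mp hc
  refine ⟨toIcoMod two_pi_pos 0 θ, toIcoMod_mem_Ico' _ _, ?_⟩
  rw [← self_sub_toIcoDiv_zsmul, ofReal_sub, ofReal_zsmul, ofReal_mul, ofReal_ofNat,
    exp_mul_I_periodic.sub_zsmul_eq]

theorem re_conj_mul_deriv_eq_of_norm_eventuallyEq {f g : ℝ → ℂ} {x : ℝ}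
    (hf : DifferentiableAt ℝ f x) (hg : DifferentiableAt ℝ g x)
    (hfg : (‖f ·‖) =ᶠ[nhdsWithin x (Set.Ici x)] (‖g ·‖)) :
    (conj (f x) * deriv f x).re = (conj (g x) * deriv g x).re := by
  have hsq := hf.hasDerivAt.norm_sq.eq_of_eventuallyEq_nhdsGE hg.hasDerivAt.norm_sq
    (hfg.fun_comp (· ^ 2))
  simpa [Complex.inner, mul_comm] using hsq

end Complex

/-- Uniqueness of the wave function lifting up to a constant phase: if two differentiable wave
functions `ψ₁, ψ₂` on `[a,b]` share the same hydrodynamic data `(√ρ, Λ)`, with `ρ = |ψ₁|² > 0`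
on `[a,b]`, then `ψ₂ = e^{iθ} ψ₁` on `[a,b]` for some `θ ∈ [0, 2π)`.  Since the density is
strictly positive, the polar factor is `φ_j = ψ_j / |ψ_j|`. -/
theorem lifting_unique_up_to_phase
    (a b : ℝ) (hab : a ≤ b) (ψ₁ ψ₂ : ℝ → ℂ)
    (hψ₁ : Differentiable ℝ ψ₁) (hψ₂ : Differentiable ℝ ψ₂)
    (hpos : ∀ x ∈ Set.Icc a b, ψ₁ x ≠ 0)
    (hamp : ∀ x ∈ Set.Icc a b, ‖ψ₁ x‖ = ‖ψ₂ x‖)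
    (hΛ : ∀ x ∈ Set.Icc a b,
      (starRingEnd ℂ (ψ₁ x / (‖ψ₁ x‖ : ℂ)) * deriv ψ₁ x).im
        = (starRingEnd ℂ (ψ₂ x / (‖ψ₂ x‖ : ℂ)) * deriv ψ₂ x).im) :
    ∃ θ ∈ Set.Ico (0:ℝ) (2 * π),
      ∀ x ∈ Set.Icc a b, ψ₂ x = Complex.exp (θ * Complex.I) * ψ₁ x := by
  have hcurrent : ∀ x ∈ Set.Ico a b,
      conj (ψ₁ x) * deriv ψ₁ x = conj (ψ₂ x) * deriv ψ₂ x := by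
    intro x hx
    have hxI := Set.Ico_subset_Icc_self hx
    refine Complex.ext (re_conj_mul_deriv_eq_of_norm_eventuallyEq (hψ₁ x) (hψ₂ x) ?_) ?_
    · filter_upwards [Icc_mem_nhdsGE_of_mem hx] using hamp
    · have h := hΛ x hxI
      rwa [im_conj_div_norm_mul, im_conj_div_norm_mul, ← hamp x hxI,
        div_left_inj' (norm_ne_zero_iff.mpr (hpos x hxI))] at h
  have hratio := div_eqOn_Icc_of_deriv_mul_eq hψ₂ hψ₁ hpos fun x hx =>
    mul_comm_eq_of_conj_mul_eq (hamp x (Set.Ico_subset_Icc_self hx))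
      (hpos x (Set.Ico_subset_Icc_self hx)) (hcurrent x hx)
  have ha : a ∈ Set.Icc a b := Set.left_mem_Icc.mpr hab
  obtain ⟨θ, hθ, hexp⟩ := exists_mem_Ico_exp_mul_I_eq (c := ψ₂ a / ψ₁ a) <| by
    rw [norm_div, ← hamp a ha, div_self (norm_ne_zero_iff.mpr (hpos a ha))]
  refine ⟨θ, hθ, fun x hx => ?_⟩
  rw [hexp, ← hratio x hx, div_mul_cancel₀ _ (hpos x hx)]
end
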